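/- With λ_{m−1} = (m!)^{-2}, λ_m = ((m+1)!)^{-2}, β_m = (m!)², and G_{m−1}, G_m independent geometric random variables with success probabilities λ_{m−1}, λ_m respectively, the probabilities P(G_{m−1} ≥ G_m − β_m + 1) are summable in m ≥ 1. -/
import Mathlib


open MeasureTheory ProbabilityTheory

/-- With λ_m = ((m+1)!)⁻², β_m = (m!)², and (G_m) geometric with success probability λ_m,
G_{m-1} independent of G_m, the probabilities P(G_{m−1} ≥ G_m − β_m + 1) are summable
over m ≥ 1.  (Here the index is shifted: the term for `m : ℕ` corresponds to the pair
(G_m, G_{m+1}) of the paper's levels m and m+1, i.e. the paper's m ≥ 1.) -/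
theorem stmt3 {Ω : Type*} [MeasurableSpace Ω] (P : Measure Ω) [IsProbabilityMeasure P]
    (G : ℕ → Ω → ℕ) (hG : ∀ m, Measurable (G m))
    (hgeo : ∀ m x, P {ω | G m ω = x} =
      ENNReal.ofReal ((1 - 1 / ((Nat.factorial (m + 1) : ℝ)) ^ 2) ^ x *
        (1 / ((Nat.factorial (m + 1) : ℝ)) ^ 2)))
    (hindep : ∀ m, IndepFun (G m) (G (m + 1)) P) :
    Summable (fun m : ℕ =>
      (P {ω | (G m ω : ℤ) ≥ (G (m + 1) ω : ℤ) - (Nat.factorial (m + 1) : ℤ) ^ 2 + 1}).toReal) := by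
  -- notation
  set l : ℕ → ℝ := fun m => 1 / ((Nat.factorial (m + 1) : ℝ)) ^ 2 with hl
  have hfacpos : ∀ k : ℕ, (0:ℝ) < (Nat.factorial k : ℝ) := fun k => by
    exact_mod_cast Nat.factorial_pos k
  have hfac1 : ∀ k : ℕ, (1:ℝ) ≤ (Nat.factorial k : ℝ) := fun k => by
    exact_mod_cast Nat.one_le_iff_ne_zero.mpr (Nat.factorial_pos k).ne'
  have hl0 : ∀ m, 0 < l m := fun m => by
    have := hfacpos (m+1); positivity
  have hl1 : ∀ m, l m ≤ 1 := fun m => by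
    have h1 := hfac1 (m+1)
    have h2 : (1:ℝ) ≤ ((Nat.factorial (m+1) : ℝ))^2 := by nlinarith
    simpa [hl] using (div_le_one (by linarith)).mpr h2
  have hr0 : ∀ m, 0 ≤ 1 - l m := fun m => by linarith [hl1 m]
  have hr1 : ∀ m, 1 - l m < 1 := fun m => by linarith [hl0 m]
  -- the bound for each m
  have key : ∀ m : ℕ,
      P {ω | (G m ω : ℤ) ≥ (G (m + 1) ω : ℤ) - (Nat.factorial (m + 1) : ℤ) ^ 2 + 1}
        ≤ ENNReal.ofReal (2 / ((m:ℝ) + 2) ^ 2) := by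
    intro m
    set B : ℕ := (Nat.factorial (m+1))^2 with hB
    have hB1 : 1 ≤ B := Nat.one_le_iff_ne_zero.mpr (by positivity)
    have hA : ∀ y : ℕ, (0:ℝ) ≤ (1 - l m) ^ y * l m :=
      fun y => mul_nonneg (pow_nonneg (hr0 m) y) (hl0 m).le
    have hA2 : ∀ y : ℕ, (0:ℝ) ≤ (1 - l m) ^ y * l m * ((y:ℝ) + B) * l (m+1) := fun y =>
      mul_nonneg (mul_nonneg (hA y) (by positivity)) (hl0 (m+1)).le
    -- rewrite the event
    have hev : {ω | (G m ω : ℤ) ≥ (G (m + 1) ω : ℤ) - (Nat.factorial (m + 1) : ℤ) ^ 2 + 1}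
        = {ω | G (m+1) ω < G m ω + B} := by
      ext ω
      simp only [Set.mem_setOf_eq, hB]
      have hcast : ((Nat.factorial (m+1) ^ 2 : ℕ) : ℤ) = (Nat.factorial (m+1) : ℤ) ^ 2 := by
        push_cast; ring
      rw [← hcast]
      omega
    rw [hev]
    -- tail bound for G (m+1)
    have tail : ∀ n : ℕ, P {ω | G (m+1) ω < n} ≤ (n : ENNReal) * ENNReal.ofReal (l (m+1)) := by
      intro n
      have hset : {ω | G (m+1) ω < n} = ⋃ x ∈ Finset.range n, {ω | G (m+1) ω = x} := by
        ext ω; simp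
      rw [hset]
      refine (measure_biUnion_finset_le _ _).trans ?_
      have hterm : ∀ x ∈ Finset.range n, P {ω | G (m+1) ω = x} ≤ ENNReal.ofReal (l (m+1)) := by
        intro x _
        rw [hgeo (m+1) x]
        apply ENNReal.ofReal_le_ofReal
        have h1 : (1 - l (m+1)) ^ x ≤ 1 := pow_le_one₀ (hr0 (m+1)) (by linarith [hl0 (m+1)])
        calc (1 - l (m+1)) ^ x * l (m+1) ≤ 1 * l (m+1) :=
              mul_le_mul_of_nonneg_right h1 (hl0 (m+1)).le
          _ = l (m+1) := one_mul _
      calc ∑ x ∈ Finset.range n, P {ω | G (m+1) ω = x}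
          ≤ ∑ _x ∈ Finset.range n, ENNReal.ofReal (l (m+1)) := Finset.sum_le_sum hterm
        _ = (n : ENNReal) * ENNReal.ofReal (l (m+1)) := by simp [mul_comm]
    -- decompose over the value of G m
    have hsub : {ω | G (m+1) ω < G m ω + B}
        ⊆ ⋃ y : ℕ, ({ω | G m ω = y} ∩ {ω | G (m+1) ω < y + B}) := by
      intro ω hω
      exact Set.mem_iUnion.mpr ⟨G m ω, rfl, hω⟩
    have step1 : P {ω | G (m+1) ω < G m ω + B}
        ≤ ∑' y : ℕ, P ({ω | G m ω = y} ∩ {ω | G (m+1) ω < y + B}) :=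
      (measure_mono hsub).trans (measure_iUnion_le _)
    have hind : ∀ y : ℕ, P ({ω | G m ω = y} ∩ {ω | G (m+1) ω < y + B})
        = P {ω | G m ω = y} * P {ω | G (m+1) ω < y + B} := by
      intro y
      have := (hindep m).measure_inter_preimage_eq_mul {y} (Set.Iio (y + B))
        (measurableSet_singleton y) measurableSet_Iio
      simpa [Set.preimage, Set.mem_Iio] using this
    have step2 : ∀ y : ℕ, P ({ω | G m ω = y} ∩ {ω | G (m+1) ω < y + B})
        ≤ ENNReal.ofReal ((1 - l m) ^ y * l m * ((y:ℝ) + B) * l (m+1)) := by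
      intro y
      rw [hind y, hgeo m y]
      have h2 := tail (y + B)
      calc ENNReal.ofReal ((1 - l m) ^ y * l m) * P {ω | G (m+1) ω < y + B}
          ≤ ENNReal.ofReal ((1 - l m) ^ y * l m) *
              (((y + B : ℕ) : ENNReal) * ENNReal.ofReal (l (m+1))) := mul_le_mul_right h2 _
        _ = ENNReal.ofReal (((1 - l m) ^ y * l m) * (((y + B : ℕ) : ℝ) * l (m+1))) := by
            rw [ENNReal.ofReal_mul (hA y), ENNReal.ofReal_mul (Nat.cast_nonneg _),
              ENNReal.ofReal_natCast]
        _ = ENNReal.ofReal ((1 - l m) ^ y * l m * ((y:ℝ) + B) * l (m+1)) := by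
            congr 1; push_cast; ring
    -- sum the geometric series
    have hnorm : ‖1 - l m‖ < 1 := by
      rw [Real.norm_eq_abs, abs_of_nonneg (hr0 m)]; exact hr1 m
    have h1 : Summable (fun y : ℕ => (y:ℝ) * (1 - l m) ^ y) := by
      simpa using summable_pow_mul_geometric_of_norm_lt_one 1 (r := 1 - l m) hnorm
    have h2 : Summable (fun y : ℕ => (1 - l m) ^ y) :=
      summable_geometric_of_lt_one (hr0 m) (hr1 m)
    have hsummable : Summable (fun y : ℕ => (1 - l m) ^ y * l m * ((y:ℝ) + B) * l (m+1)) := by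
      have h3 : Summable (fun y : ℕ => ((y:ℝ) + B) * (1 - l m) ^ y) := by
        simpa [add_mul] using h1.add (h2.mul_left (B:ℝ))
      apply Summable.of_nonneg_of_le hA2
        (fun y => le_of_eq (by ring)) (h3.mul_left (l m * l (m+1)))
    have htsum : (∑' y : ℕ, (1 - l m) ^ y * l m * ((y:ℝ) + B) * l (m+1))
        ≤ 2 * B * l (m+1) := by
      have hE : (∑' y : ℕ, (y:ℝ) * (1 - l m) ^ y) = (1 - l m) / (l m) ^ 2 := by
        simpa using tsum_coe_mul_geometric_of_norm_lt_one (r := 1 - l m) hnorm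
      have hGsum : (∑' y : ℕ, (1 - l m) ^ y) = (l m)⁻¹ := by
        simpa using tsum_geometric_of_lt_one (hr0 m) (hr1 m)
      have hrw : (fun y : ℕ => (1 - l m) ^ y * l m * ((y:ℝ) + B) * l (m+1))
          = fun y : ℕ => l m * l (m+1) * ((y:ℝ) * (1 - l m) ^ y) +
              l m * l (m+1) * (B:ℝ) * ((1 - l m) ^ y) := by
        funext y; ring
      rw [hrw, Summable.tsum_add (h1.mul_left (l m * l (m+1))) (h2.mul_left (l m * l (m+1) * (B:ℝ))),
        tsum_mul_left, tsum_mul_left, hE, hGsum]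
      have hBl : (B:ℝ) = (l m)⁻¹ := by
        rw [hB, hl]; push_cast; rw [one_div, inv_inv]
      have hlpos := hl0 m
      have hl1pos := hl0 (m+1)
      have heq : l m * ((1 - l m) / (l m) ^ 2) = (1 - l m) / l m := by
        field_simp
      have h1le : l m * ((1 - l m) / (l m) ^ 2) ≤ (B:ℝ) := by
        rw [hBl, ← one_div, heq, div_le_div_iff₀ hlpos hlpos]
        nlinarith
      have hthis : l m * l (m+1) * ((1 - l m) / (l m) ^ 2) ≤ l (m+1) * B := by
        calc l m * l (m+1) * ((1 - l m) / (l m) ^ 2)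
            = l (m+1) * (l m * ((1 - l m) / (l m) ^ 2)) := by ring
          _ ≤ l (m+1) * B := mul_le_mul_of_nonneg_left h1le hl1pos.le
      have h2eq : l m * l (m+1) * (B:ℝ) * (l m)⁻¹ = l (m+1) * B := by
        field_simp
      nlinarith [hthis, h2eq]
    -- combine
    have step3 : P {ω | G (m+1) ω < G m ω + B}
        ≤ ENNReal.ofReal (2 * B * l (m+1)) := by
      refine step1.trans ?_
      calc (∑' y : ℕ, P ({ω | G m ω = y} ∩ {ω | G (m+1) ω < y + B}))
          ≤ ∑' y : ℕ, ENNReal.ofReal ((1 - l m) ^ y * l m * ((y:ℝ) + B) * l (m+1)) :=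
            ENNReal.tsum_le_tsum step2
        _ = ENNReal.ofReal (∑' y : ℕ, (1 - l m) ^ y * l m * ((y:ℝ) + B) * l (m+1)) :=
            (ENNReal.ofReal_tsum_of_nonneg hA2 hsummable).symm
        _ ≤ ENNReal.ofReal (2 * B * l (m+1)) := ENNReal.ofReal_le_ofReal htsum
    refine step3.trans (le_of_eq ?_)
    congr 1
    have hfs : (Nat.factorial (m+2) : ℝ) = ((m:ℝ) + 2) * (Nat.factorial (m+1) : ℝ) := by
      have h : Nat.factorial (m+2) = (m+2) * Nat.factorial (m+1) := rfl
      rw [h]; push_cast; ring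
    rw [hB, hl]
    push_cast
    rw [hfs]
    have h1 := hfacpos (m+1)
    have h2 : ((m:ℝ) + 2) ≠ 0 := by positivity
    field_simp
  -- conclude summability
  have hsum2 : Summable (fun m : ℕ => 2 / ((m:ℝ) + 2) ^ 2) := by
    have h0 : Summable (fun n : ℕ => 1 / (n:ℝ) ^ 2) :=
      Real.summable_one_div_nat_pow.mpr one_lt_two
    have h1 : Summable (fun n : ℕ => 1 / ((n:ℝ) + 2) ^ 2) := by
      have := (summable_nat_add_iff 2).mpr h0
      simpa [add_comm] using this
    simpa [div_eq_mul_inv, mul_comm] using h1.mul_left 2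
  refine Summable.of_nonneg_of_le (fun m => ENNReal.toReal_nonneg) (fun m => ?_) hsum2
  have hm := key m
  have h2 : (2:ℝ) / ((m:ℝ) + 2) ^ 2 = (ENNReal.ofReal (2 / ((m:ℝ) + 2) ^ 2)).toReal := by
    rw [ENNReal.toReal_ofReal (by positivity)]
  rw [h2]
  exact ENNReal.toReal_mono ENNReal.ofReal_ne_top hm
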